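/- arXiv:2412.15648 — 2 statements merged into one kernel-verified Lean document; each statement's English description precedes it below -/
import Mathlib

section
/- Let ρ satisfy the moment hypotheses and fix a positive integer σ. Then for every y ∈ ℝ, the complex numbers (ρ̂(√(σ/N)·y))^N converge to exp(−σγ y²/2) as N → ∞. -/
/-!
As `ρ ≥ 0`, `ρ̂(t)` is the characteristic function at `-t` of the probability measure with
density `ρ`, which has mean `0` and variance `γ`. Taylor's theorem for characteristic functions
gives `ρ̂(t) = 1 - γ t² / 2 + o(t²)`, so at `t = √(σ/N) y` we get
`ρ̂(t) = 1 - σ γ y² / (2N) + o(1/N)`, whose `N`-th power tends to `exp(-σ γ y² / 2)`.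
-/

open MeasureTheory Filter Real Topology

/-- The Fourier transform `ρ̂(t) = ∫ e^{-itx} ρ(x) dx` of a real-valued function. -/
noncomputable def FT (ρ : ℝ → ℝ) (t : ℝ) : ℂ :=
  ∫ x : ℝ, Complex.exp (-Complex.I * t * x) * (ρ x : ℂ)

section WithDensityOfReal

variable {α E : Type*} [MeasurableSpace α] [NormedAddCommGroup E] [NormedSpace ℝ E]
  {μ : Measure α} {ρ : α → ℝ}

theorem integral_withDensity_ofReal_eq_integral_smul (hρ : AEMeasurable ρ μ) (hpos : 0 ≤ᵐ[μ] ρ)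
    (g : α → E) :
    ∫ x, g x ∂μ.withDensity (fun x => ENNReal.ofReal (ρ x)) = ∫ x, ρ x • g x ∂μ := by
  rw [integral_withDensity_eq_integral_toReal_smul₀ hρ.ennreal_ofReal
    (.of_forall fun _ => ENNReal.ofReal_lt_top)]
  refine integral_congr_ae ?_
  filter_upwards [hpos] with x hx
  rw [ENNReal.toReal_ofReal hx]

theorem integrable_withDensity_ofReal_iff (hρ : AEMeasurable ρ μ) (hpos : 0 ≤ᵐ[μ] ρ)
    {g : α → E} :
    Integrable g (μ.withDensity fun x => ENNReal.ofReal (ρ x)) ↔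
      Integrable (fun x => ρ x • g x) μ := by
  rw [integrable_withDensity_iff_integrable_smul₀' hρ.ennreal_ofReal
    (.of_forall fun _ => ENNReal.ofReal_lt_top)]
  refine integrable_congr ?_
  filter_upwards [hpos] with x hx
  rw [ENNReal.toReal_ofReal hx]

end WithDensityOfReal

open Complex in
theorem isLittleO_charFun_sub_taylor_two {μ : Measure ℝ} [IsFiniteMeasure μ] (h : MemLp id 2 μ) :
    (fun t : ℝ => charFun μ t -
      (μ.real Set.univ + t * I * ∫ x, x ∂μ - t ^ 2 / 2 * ∫ x, x ^ 2 ∂μ)) =o[𝓝 0]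
      fun t => t ^ 2 := by
  have htaylor (t : ℝ) : taylorWithinEval (charFun μ) 2 Set.univ 0 t =
      μ.real Set.univ + t * I * ∫ x, x ∂μ - t ^ 2 / 2 * ∫ x, x ^ 2 ∂μ := by
    rw [taylorWithinEval_charFun_zero h]
    simp only [Finset.sum_range_succ, Finset.range_one, Finset.sum_singleton]
    norm_num
    linear_combination (t ^ 2 / 2 * ∫ x, x ^ 2 ∂μ : ℂ) * I_sq
  simpa only [sub_zero, htaylor] using taylor_isLittleO_univ (x₀ := 0) (contDiff_charFun h)

section FourierTransform

variable {ρ : ℝ → ℝ}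

local notation "μ[" ρ "]" => volume.withDensity fun x => ENNReal.ofReal (ρ x)

theorem FT_eq_charFun_withDensity (hρ : AEMeasurable ρ) (hpos : 0 ≤ᵐ[volume] ρ) (t : ℝ) :
    FT ρ t = charFun μ[ρ] (-t) := by
  rw [charFun_apply_real, integral_withDensity_ofReal_eq_integral_smul hρ hpos, FT]
  congr 1 with x
  rw [Complex.real_smul, mul_comm]
  push_cast
  ring_nf

theorem isLittleO_FT_sub_taylor_two (hρ : Integrable ρ) (hpos : 0 ≤ᵐ[volume] ρ)
    (hm2 : Integrable fun x => x ^ 2 * ρ x) :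
    (fun t : ℝ => FT ρ t - ((∫ x, ρ x : ℝ) - t * Complex.I * (∫ x, x * ρ x : ℝ)
      - t ^ 2 / 2 * (∫ x, x ^ 2 * ρ x : ℝ))) =o[𝓝 0] fun t => t ^ 2 := by
  have := isFiniteMeasure_withDensity_ofReal hρ.2
  have hmeas := hρ.aemeasurable
  have hL2 : MemLp id 2 μ[ρ] := by
    rw [memLp_two_iff_integrable_sq aestronglyMeasurable_id,
      integrable_withDensity_ofReal_iff hmeas hpos]
    simpa only [smul_eq_mul, id, mul_comm] using hm2
  have hneg : Tendsto (fun t : ℝ => -t) (𝓝 0) (𝓝 0) := by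
    simpa using (continuous_neg.tendsto (0 : ℝ))
  have h := (isLittleO_charFun_sub_taylor_two hL2).comp_tendsto hneg
  simp only [Function.comp_def, neg_sq] at h
  have hmass : μ[ρ].real Set.univ = ∫ x, ρ x := by
    simpa using integral_withDensity_ofReal_eq_integral_smul hmeas hpos fun _ => (1 : ℝ)
  have hmean : ∫ x, x ∂μ[ρ] = ∫ x, x * ρ x := by
    simpa [mul_comm] using integral_withDensity_ofReal_eq_integral_smul hmeas hpos fun x => x
  have hvar : ∫ x, x ^ 2 ∂μ[ρ] = ∫ x, x ^ 2 * ρ x := by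
    simpa [mul_comm] using integral_withDensity_ofReal_eq_integral_smul hmeas hpos fun x => x ^ 2
  refine h.congr_left fun t => ?_
  rw [FT_eq_charFun_withDensity hmeas hpos, hmass, hmean, hvar]
  push_cast
  ring

end FourierTransform

theorem tendsto_pow_sqrt_div_of_isLittleO {φ : ℝ → ℂ} {a : ℂ}
    (hφ : (fun t => φ t - (1 - a * t ^ 2)) =o[𝓝 0] fun t => t ^ 2) {c : ℝ} (hc : 0 ≤ c) (y : ℝ) :
    Tendsto (fun N : ℕ => φ (√(c / N) * y) ^ N) atTop (𝓝 (Complex.exp (-(a * c * y ^ 2)))) := by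
  set t : ℕ → ℝ := fun N => √(c / N) * y
  have ht : Tendsto t atTop (𝓝 0) := by
    have h := ((continuous_sqrt.tendsto 0).comp
      (tendsto_const_nhds (x := c) |>.div_atTop tendsto_natCast_atTop_atTop)).mul_const y
    simpa only [t, Function.comp_def, sqrt_zero, zero_mul] using h
  have ht_sq (N : ℕ) : t N ^ 2 = c * y ^ 2 / N := by
    simp only [t, mul_pow, sq_sqrt (div_nonneg hc N.cast_nonneg)]
    ring
  apply Complex.tendsto_pow_exp_of_isLittleO_sub_add_div
  have hbig : (fun N => t N ^ 2) =O[atTop] fun N : ℕ => 1 / (N : ℂ) := by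
    refine .of_bound (c * y ^ 2) (.of_forall fun N => ?_)
    simp [ht_sq, abs_of_nonneg hc, div_eq_mul_inv]
  refine ((hφ.comp_tendsto ht).trans_isBigO hbig).congr_left fun N => ?_
  have hN : (t N : ℂ) ^ 2 = c * y ^ 2 / N := mod_cast ht_sq N
  simp only [Function.comp_apply, hN]
  ring

theorem pointwise_convergence_of_char_powers_general
    (ρ : ℝ → ℝ) (γ : ℝ) (σ : ℕ)
    (hInt : Integrable ρ)
    (hpos : ∀ᵐ x : ℝ, 0 ≤ ρ x)
    (hmass : ∫ x : ℝ, ρ x = 1)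
    (hmean : ∫ x : ℝ, x * ρ x = 0)
    (hm2 : Integrable (fun x : ℝ => x ^ 2 * ρ x))
    (hγ : γ = ∫ x : ℝ, x ^ 2 * ρ x) :
    ∀ y : ℝ,
      Tendsto (fun N : ℕ => (FT ρ (Real.sqrt ((σ : ℝ) / N) * y)) ^ N) atTop
        (𝓝 (Complex.exp (-((σ : ℝ) * γ * y ^ 2 / 2)))) := by
  intro y
  have hFT : (fun t : ℝ => FT ρ t - (1 - (γ / 2 : ℂ) * t ^ 2)) =o[𝓝 0] fun t => t ^ 2 := by
    refine (isLittleO_FT_sub_taylor_two hInt hpos hm2).congr_left fun t => ?_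
    rw [hmass, hmean, ← hγ]
    push_cast
    ring
  convert tendsto_pow_sqrt_div_of_isLittleO hFT σ.cast_nonneg y using 3
  push_cast
  ring

theorem pointwise_convergence_of_char_powers
    (ρ : ℝ → ℝ) (γ : ℝ) (σ : ℕ) (hσ : 1 ≤ σ)
    (hInt : Integrable ρ)
    (hpos : ∀ᵐ x : ℝ, 0 ≤ ρ x)
    (hmass : ∫ x : ℝ, ρ x = 1)
    (hm1 : Integrable (fun x : ℝ => x * ρ x))
    (hmean : ∫ x : ℝ, x * ρ x = 0)
    (hm2 : Integrable (fun x : ℝ => x ^ 2 * ρ x))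
    (hγ : γ = ∫ x : ℝ, x ^ 2 * ρ x) (hγpos : 0 < γ) :
    ∀ y : ℝ,
      Tendsto (fun N : ℕ => (FT ρ (Real.sqrt ((σ : ℝ) / N) * y)) ^ N) atTop
        (𝓝 (Complex.exp (-((σ : ℝ) * γ * y ^ 2 / 2)))) :=
  pointwise_convergence_of_char_powers_general ρ γ σ hInt hpos hmass hmean hm2 hγ
end

section
/- Let ρ satisfy the moment hypotheses. Then lim_{t→0, t≠0} |ρ̂(t)|^{1/t²} = e^{−γ/2}. -/
/-!
The measure with density `ρ` is a probability measure with mean `0` and variance `γ`, and `ρ̂` is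
the complex conjugate of its characteristic function, so Taylor's theorem gives
`ρ̂(t) = 1 - γ t² / 2 + o(t²)`. Since `log` has derivative `1` at `1`, also
`log ρ̂(t) = -γ t² / 2 + o(t²)`; its real part is `log |ρ̂(t)|`, so `log |ρ̂(t)| / t² → -γ / 2`.
-/

open MeasureTheory Filter Real Topology

open Asymptotics

section QuadraticExpansion

variable {f : ℝ → ℂ} {c : ℝ}

lemma isBigO_sub_one_of_isLittleO
    (hf : (fun t : ℝ => f t - (1 - c * t ^ 2 / 2)) =o[𝓝 0] fun t => t ^ 2) :
    (fun t => f t - 1) =O[𝓝 0] fun t => t ^ 2 := by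
  have hq : (fun t : ℝ => (c * t ^ 2 / 2 : ℂ)) =O[𝓝 0] fun t => t ^ 2 :=
    .of_bound (‖c‖ / 2) (.of_forall fun t => (by simp; ring : _ = _).le)
  exact (hf.isBigO.sub hq).congr_left fun t => by ring

lemma tendsto_one_of_isLittleO
    (hf : (fun t : ℝ => f t - (1 - c * t ^ 2 / 2)) =o[𝓝 0] fun t => t ^ 2) :
    Tendsto f (𝓝 0) (𝓝 1) := by
  rw [← tendsto_sub_nhds_zero_iff]
  exact (isBigO_sub_one_of_isLittleO hf).trans_tendsto
    (by simpa using (continuous_pow 2).tendsto (0 : ℝ))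

lemma isLittleO_log_add_of_isLittleO
    (hf : (fun t : ℝ => f t - (1 - c * t ^ 2 / 2)) =o[𝓝 0] fun t => t ^ 2) :
    (fun t : ℝ => Real.log ‖f t‖ + c * t ^ 2 / 2) =o[𝓝 0] fun t => t ^ 2 := by
  have hlog : (fun z => Complex.log z - (z - 1)) =o[𝓝 1] fun z => z - 1 := by
    simpa using (Complex.hasDerivAt_log Complex.one_mem_slitPlane).isLittleO
  have h := ((hlog.comp_tendsto (tendsto_one_of_isLittleO hf)).trans_isBigO
    (isBigO_sub_one_of_isLittleO hf)).add hf
  refine ((Complex.reCLM.isBigO_comp _ _).trans_isLittleO h).congr_left fun t => ?_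
  norm_cast
  simp only [Function.comp_apply, Complex.reCLM_apply, Complex.add_re, Complex.sub_re,
    Complex.log_re, Complex.one_re, Complex.ofReal_re]
  ring

lemma tendsto_norm_rpow_one_div_sq_of_isLittleO
    (hf : (fun t : ℝ => f t - (1 - c * t ^ 2 / 2)) =o[𝓝 0] fun t => t ^ 2) :
    Tendsto (fun t : ℝ => ‖f t‖ ^ (1 / t ^ 2)) (𝓝[≠] 0) (𝓝 (exp (-c / 2))) := by
  have hlog : Tendsto (fun t : ℝ => Real.log ‖f t‖ / t ^ 2) (𝓝[≠] 0) (𝓝 (-c / 2)) := by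
    have h : Tendsto _ (𝓝[≠] (0 : ℝ)) _ :=
      ((isLittleO_log_add_of_isLittleO hf).tendsto_div_nhds_zero.mono_left
        nhdsWithin_le_nhds).sub_const (c / 2)
    rw [zero_sub, ← neg_div] at h
    refine h.congr' ?_
    filter_upwards [self_mem_nhdsWithin] with t (ht : t ≠ 0)
    field_simp
    ring
  have hpos : ∀ᶠ t in 𝓝[≠] 0, 0 < ‖f t‖ :=
    ((tendsto_one_of_isLittleO hf).norm.eventually (lt_mem_nhds (by simp))).filter_mono
      nhdsWithin_le_nhds
  refine ((continuous_exp.tendsto _).comp hlog).congr' ?_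
  filter_upwards [hpos] with t ht
  rw [Function.comp_apply, rpow_def_of_pos ht, mul_one_div]

end QuadraticExpansion

section CharFun

variable {μ : Measure ℝ} [IsProbabilityMeasure μ]

lemma charFun_sub_quadratic_isLittleO (h2 : MemLp id 2 μ) (hmean : ∫ x, x ∂μ = 0) :
    (fun t : ℝ => charFun μ t - (1 - (∫ x, x ^ 2 ∂μ) * t ^ 2 / 2)) =o[𝓝 0] fun t => t ^ 2 := by
  have h := taylor_isLittleO_univ (x₀ := 0) (n := 2) (contDiff_charFun h2)
  simp only [taylorWithinEval_charFun_zero h2, sub_zero] at h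
  refine h.congr_left fun t => ?_
  simp only [Finset.sum_range_succ, Finset.sum_range_zero, pow_zero, pow_one, integral_const,
    probReal_univ, one_smul, hmean]
  push_cast
  linear_combination (-(∫ x, x ^ 2 ∂μ) * t ^ 2 / 2 : ℂ) * Complex.I_sq

end CharFun

noncomputable def densityMeasure (ρ : ℝ → ℝ) : Measure ℝ :=
  volume.withDensity fun x => ENNReal.ofReal (ρ x)

section DensityMeasure

variable {ρ : ℝ → ℝ} {E : Type*} [NormedAddCommGroup E] [NormedSpace ℝ E]

lemma integral_densityMeasure (hρ : AEMeasurable ρ) (hpos : ∀ᵐ x, 0 ≤ ρ x) (g : ℝ → E) :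
    ∫ x, g x ∂densityMeasure ρ = ∫ x, ρ x • g x := by
  rw [densityMeasure, integral_withDensity_eq_integral_toReal_smul₀ hρ.ennreal_ofReal
    (.of_forall fun _ => ENNReal.ofReal_lt_top)]
  refine integral_congr_ae ?_
  filter_upwards [hpos] with x hx
  rw [ENNReal.toReal_ofReal hx]

lemma integrable_densityMeasure_iff (hρ : AEMeasurable ρ) (hpos : ∀ᵐ x, 0 ≤ ρ x) {g : ℝ → E} :
    Integrable g (densityMeasure ρ) ↔ Integrable fun x => ρ x • g x := by
  rw [densityMeasure, integrable_withDensity_iff_integrable_smul₀' hρ.ennreal_ofReal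
    (.of_forall fun _ => ENNReal.ofReal_lt_top)]
  refine integrable_congr ?_
  filter_upwards [hpos] with x hx
  rw [ENNReal.toReal_ofReal hx]

lemma isProbabilityMeasure_densityMeasure (hInt : Integrable ρ) (hpos : ∀ᵐ x, 0 ≤ ρ x)
    (hmass : ∫ x, ρ x = 1) : IsProbabilityMeasure (densityMeasure ρ) := by
  constructor
  rw [densityMeasure, withDensity_apply _ MeasurableSet.univ, Measure.restrict_univ,
    ← ofReal_integral_eq_lintegral_ofReal hInt hpos, hmass, ENNReal.ofReal_one]

lemma FT_eq_conj_charFun (hρ : AEMeasurable ρ) (hpos : ∀ᵐ x, 0 ≤ ρ x) (t : ℝ) :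
    FT ρ t = starRingEnd ℂ (charFun (densityMeasure ρ) t) := by
  rw [← charFun_neg, charFun_apply_real, integral_densityMeasure hρ hpos, FT]
  refine integral_congr_ae (.of_forall fun x => ?_)
  simp only [Complex.real_smul, Complex.ofReal_neg]
  ring_nf

end DensityMeasure

theorem modulus_power_limit_at_zero_general
    (ρ : ℝ → ℝ) (γ : ℝ)
    (hInt : Integrable ρ)
    (hpos : ∀ᵐ x : ℝ, 0 ≤ ρ x)
    (hmass : ∫ x : ℝ, ρ x = 1)
    (hmean : ∫ x : ℝ, x * ρ x = 0)
    (hm2 : Integrable (fun x : ℝ => x ^ 2 * ρ x))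
    (hγ : γ = ∫ x : ℝ, x ^ 2 * ρ x) :
    Tendsto (fun t : ℝ => ‖FT ρ t‖ ^ (1 / t ^ 2)) (𝓝[≠] 0)
      (𝓝 (Real.exp (-γ / 2))) := by
  have hρ := hInt.aemeasurable
  have := isProbabilityMeasure_densityMeasure hInt hpos hmass
  have hL2 : MemLp id 2 (densityMeasure ρ) := by
    rw [memLp_two_iff_integrable_sq aestronglyMeasurable_id,
      integrable_densityMeasure_iff hρ hpos]
    simpa only [id, smul_eq_mul, mul_comm] using hm2
  have hmean' : ∫ x, x ∂densityMeasure ρ = 0 := by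
    rw [integral_densityMeasure hρ hpos]
    simpa only [smul_eq_mul, mul_comm] using hmean
  have hvar : ∫ x, x ^ 2 ∂densityMeasure ρ = γ := by
    rw [integral_densityMeasure hρ hpos, hγ]
    simp only [smul_eq_mul, mul_comm]
  have h := tendsto_norm_rpow_one_div_sq_of_isLittleO
    (charFun_sub_quadratic_isLittleO hL2 hmean')
  rw [hvar] at h
  simpa only [FT_eq_conj_charFun hρ hpos, Complex.norm_conj] using h

theorem modulus_power_limit_at_zero
    (ρ : ℝ → ℝ) (γ : ℝ)
    (hInt : Integrable ρ)
    (hpos : ∀ᵐ x : ℝ, 0 ≤ ρ x)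
    (hmass : ∫ x : ℝ, ρ x = 1)
    (hm1 : Integrable (fun x : ℝ => x * ρ x))
    (hmean : ∫ x : ℝ, x * ρ x = 0)
    (hm2 : Integrable (fun x : ℝ => x ^ 2 * ρ x))
    (hγ : γ = ∫ x : ℝ, x ^ 2 * ρ x) (hγpos : 0 < γ) :
    Tendsto (fun t : ℝ => ‖FT ρ t‖ ^ (1 / t ^ 2)) (𝓝[≠] 0)
      (𝓝 (Real.exp (-γ / 2))) :=
  modulus_power_limit_at_zero_general ρ γ hInt hpos hmass hmean hm2 hγ
end
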